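/- arXiv:1803.06644 — 8 statements merged into one kernel-verified Lean document; each statement's English description precedes it below -/
import Mathlib

section
/- Let A be a finite set of alternatives and ≿ a complete transitive preference relation on A held by an agent. For any two subsets S, T of A of the same size k, if S ≿^RS T (i.e., there is a bijection f : T β†’ S with f(a) ≿ a for all a ∈ T), then S ≿^DL T, where ≿^DL is the downward lexicographic extension comparing, from the most preferred indifference class downward, the number of committee members in each indifference class. -/
open Finset

variable {A : Type*}

/-- An agent's complete transitive preference over `A` is represented by a rank
function (smaller rank = more preferred); the fibers of `rank` are the
indifference classes `E^1 ≻ E^2 ≻ ⋯`.  `S ≿ᴿˢ T` (responsive extension):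
there is a bijection `f : T → S` with `f a ≿ a` for all `a ∈ T`. -/
def RSge (rank : A → ℕ) (S T : Finset A) : Prop :=
  ∃ f : A → A, Set.BijOn f ↑T ↑S ∧ ∀ a ∈ T, rank (f a) ≤ rank a

/-- Number of members of `S` in the indifference class of rank `l`. -/
def cnt (rank : A → ℕ) (S : Finset A) (l : ℕ) : ℕ :=
  (S.filter fun a => rank a = l).card

/-- Downward lexicographic extension: either all class counts agree, or at the
smallest (most preferred) class where they differ, `S` has more members. -/
def DLge (rank : A → ℕ) (S T : Finset A) : Prop :=
  (∀ l, cnt rank S l = cnt rank T l) ∨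
    ∃ l, cnt rank T l < cnt rank S l ∧ ∀ l' < l, cnt rank S l' = cnt rank T l'

/-- Upward lexicographic extension: either all class counts agree, or at the
largest (least preferred) class where they differ, `S` has fewer members. -/
def ULge (rank : A → ℕ) (S T : Finset A) : Prop :=
  (∀ l, cnt rank S l = cnt rank T l) ∨
    ∃ l, cnt rank S l < cnt rank T l ∧ ∀ l' > l, cnt rank S l' = cnt rank T l'

/-- `best` extension: every maximal (most preferred) element of `S` is weakly
preferred to every maximal element of `T`. -/
def Bge (rank : A → ℕ) (S T : Finset A) : Prop :=
  ∀ s ∈ S, (∀ x ∈ S, rank s ≤ rank x) →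
    ∀ t ∈ T, (∀ x ∈ T, rank t ≤ rank x) → rank s ≤ rank t

/-- `worst` extension: every minimal (least preferred) element of `S` is weakly
preferred to every minimal element of `T`. -/
def Wge (rank : A → ℕ) (S T : Finset A) : Prop :=
  ∀ s ∈ S, (∀ x ∈ S, rank x ≤ rank s) →
    ∀ t ∈ T, (∀ x ∈ T, rank x ≤ rank t) → rank s ≤ rank t

/-- Pareto optimality (efficiency) of a committee `W` of size `k` with respect
to the set extension whose weak relation is `ge`, for the profile `rank` of the
agents in `I`: no size-`k` committee weakly improves for every agent and
strictly improves (weakly better but not weakly worse) for some agent. -/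
def Efficient {I : Type*} (ge : (A → ℕ) → Finset A → Finset A → Prop)
    (rank : I → A → ℕ) (k : ℕ) (W : Finset A) : Prop :=
  ¬ ∃ W' : Finset A, W'.card = k ∧ (∀ i, ge (rank i) W' W) ∧
      ∃ i, ge (rank i) W' W ∧ ¬ ge (rank i) W W'

/-!
The bijection `f : T → S` never lowers rank, so it maps the members of `T` of rank at most `l`
injectively into the members of `S` of rank at most `l`: the cumulative class counts of `S`
dominate those of `T`. At the first class where the counts differ, the cumulative counts up to
that class differ only in that class, so there `S` has more members.
-/

theorem eq_or_exists_lt_of_forall_sum_range_le {a b : ℕ → ℕ}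
    (h : ∀ l, ∑ j ∈ range (l + 1), b j ≤ ∑ j ∈ range (l + 1), a j) :
    a = b ∨ ∃ l, b l < a l ∧ ∀ l' < l, a l' = b l' := by
  by_cases hab : a = b
  · exact Or.inl hab
  have hex : ∃ l, a l ≠ b l := Function.ne_iff.mp hab
  have hmin : ∀ l' < Nat.find hex, a l' = b l' := fun l' hl' => not_not.mp (Nat.find_min hex hl')
  have hprefix : ∑ j ∈ range (Nat.find hex), b j = ∑ j ∈ range (Nat.find hex), a j :=
    sum_congr rfl fun j hj => (hmin j (mem_range.mp hj)).symm
  have hle := h (Nat.find hex)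
  rw [sum_range_succ, sum_range_succ, hprefix, Nat.add_le_add_iff_left] at hle
  exact Or.inr ⟨Nat.find hex, lt_of_le_of_ne hle (Ne.symm (Nat.find_spec hex)), hmin⟩

theorem card_filter_rank_le_eq_sum_cnt (rank : A → ℕ) (S : Finset A) (l : ℕ) :
    #{a ∈ S | rank a ≤ l} = ∑ j ∈ range (l + 1), cnt rank S j := by
  classical
  induction l with
  | zero => simp [cnt]
  | succ l ih =>
    rw [sum_range_succ, ← ih, cnt, ← card_union_of_disjoint]
    · congr 1
      ext a
      simp only [mem_filter, mem_union, Nat.le_succ_iff, and_or_left]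
    · exact disjoint_filter.mpr fun _ _ hle heq => by omega

theorem RSge.card_filter_rank_le_le {rank : A → ℕ} {S T : Finset A} (h : RSge rank S T) (l : ℕ) :
    #{a ∈ T | rank a ≤ l} ≤ #{a ∈ S | rank a ≤ l} := by
  obtain ⟨f, hbij, hle⟩ := h
  refine card_le_card_of_injOn f (fun a ha => ?_) (hbij.injOn.mono fun a ha => ?_)
  · simp only [coe_filter, Set.mem_ofPred_eq] at ha ⊢
    exact ⟨hbij.mapsTo ha.1, (hle a ha.1).trans ha.2⟩
  · exact (mem_filter.mp ha).1

theorem rs_implies_dl_general (rank : A → ℕ) (S T : Finset A) (h : RSge rank S T) :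
    DLge rank S T := by
  have hcum (l : ℕ) : ∑ j ∈ range (l + 1), cnt rank T j ≤ ∑ j ∈ range (l + 1), cnt rank S j := by
    rw [← card_filter_rank_le_eq_sum_cnt, ← card_filter_rank_le_eq_sum_cnt]
    exact h.card_filter_rank_le_le l
  exact (eq_or_exists_lt_of_forall_sum_range_le hcum).imp congrFun id

theorem rs_implies_dl [Fintype A] (rank : A → ℕ) (k : ℕ) (S T : Finset A)
    (hS : S.card = k) (hT : T.card = k) (h : RSge rank S T) :
    DLge rank S T :=
  rs_implies_dl_general rank S T h
end

section
/- Let A be a finite set with a complete transitive preference relation ≿. For any two subsets S, T of A of the same size k, if S ≿^RS T then S ≿^UL T, where ≿^UL is the upward lexicographic extension: S ≻^UL T iff for the largest index l with |S ∩ E^l| β‰ |T ∩ E^l| we have |S ∩ E^l| < |T ∩ E^l|. -/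
open Finset

variable {A : Type*}

/-!
Compare the tail counts `#{a ∈ S | m ≤ rank a}` (members of class `m` or worse) instead of
the class counts. A bijection `f : T → S` with `f a ≿ a` maps the tail of `T` onto the tail
of `S`, so every tail of `S` is at most the corresponding tail of `T`. Both tails vanish
beyond the worst rank occurring, so either all tails agree (and then so do all class counts),
or there is a last index `l` where they differ; there the tail of `S` is strictly smaller
while the tails from `l + 1` on agree, which is exactly `S ≻^UL T` at class `l`.
-/

def cntGe (rank : A → ℕ) (S : Finset A) (m : ℕ) : ℕ :=
  #{a ∈ S | m ≤ rank a}

theorem cnt_add_cntGe_succ (rank : A → ℕ) (S : Finset A) (l : ℕ) :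
    cnt rank S l + cntGe rank S (l + 1) = cntGe rank S l := by
  unfold cnt cntGe
  rw [← card_filter_add_card_filter_not (s := {a ∈ S | l ≤ rank a}) (fun a => rank a = l),
    filter_filter, filter_filter]
  congr 2 <;> ext a <;> simp only [mem_filter] <;> exact and_congr_right fun _ => by omega

theorem cntGe_eq_zero_of_sup_lt (rank : A → ℕ) (S : Finset A) {m : ℕ} (hm : S.sup rank < m) :
    cntGe rank S m = 0 :=
  card_filter_eq_zero_iff.2 fun a ha => by
    have := le_sup (f := rank) ha
    omega

theorem RSge.cntGe_le {rank : A → ℕ} {S T : Finset A} (h : RSge rank S T) (m : ℕ) :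
    cntGe rank S m ≤ cntGe rank T m := by
  obtain ⟨f, hbij, hle⟩ := h
  refine card_le_card_of_surjOn f fun b hb => ?_
  rw [mem_coe, mem_filter] at hb
  obtain ⟨a, ha, rfl⟩ := hbij.surjOn hb.1
  exact ⟨a, mem_filter.2 ⟨ha, hb.2.trans (hle a ha)⟩, rfl⟩

theorem eq_or_exists_lt_and_eq_of_gt {f g : ℕ → ℕ} (hfg : f ≤ g)
    (hev : ∃ N, ∀ m ≥ N, f m = g m) :
    f = g ∨ ∃ l, f l < g l ∧ ∀ m > l, f m = g m := by
  classical
  rcases hn : Nat.find hev with _ | l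
  · exact .inl <| funext fun m => (hn ▸ Nat.find_spec hev) m m.zero_le
  · refine .inr ⟨l, (hfg l).lt_of_ne fun hl => ?_, fun m hm => (hn ▸ Nat.find_spec hev) m hm⟩
    refine Nat.find_min hev (by omega : l < Nat.find hev) fun m hm => ?_
    rcases hm.eq_or_lt with rfl | hm
    · exact hl
    · exact (hn ▸ Nat.find_spec hev) m hm

theorem rs_implies_ul_general (rank : A → ℕ) (S T : Finset A) (h : RSge rank S T) :
    ULge rank S T := by
  have hsplit := cnt_add_cntGe_succ rank
  have hev : ∃ N, ∀ m ≥ N, cntGe rank S m = cntGe rank T m :=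
    ⟨S.sup rank + T.sup rank + 1, fun m hm => by
      rw [cntGe_eq_zero_of_sup_lt rank S (by omega), cntGe_eq_zero_of_sup_lt rank T (by omega)]⟩
  obtain heq | ⟨l, hlt, hgt⟩ := eq_or_exists_lt_and_eq_of_gt h.cntGe_le hev
  · refine .inl fun l => ?_
    have := hsplit S l
    have := hsplit T l
    rw [heq] at *
    omega
  · refine .inr ⟨l, ?_, fun l' hl' => ?_⟩
    · have := hsplit S l
      have := hsplit T l
      have := hgt (l + 1) (by omega)
      omega
    · have := hsplit S l'
      have := hsplit T l'
      have := hgt l' hl'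
      have := hgt (l' + 1) (by omega)
      omega

theorem rs_implies_ul [Fintype A] (rank : A → ℕ) (k : ℕ) (S T : Finset A)
    (hS : S.card = k) (hT : T.card = k) (h : RSge rank S T) :
    ULge rank S T :=
  rs_implies_ul_general rank S T h
end

section
/- Let A be a finite set with a complete transitive preference relation ≿ and let S, T be nonempty subsets of A of the same size. If S ≿^UL T then S ≿^W T, where S ≿^W T means every minimal element of S under ≿ is weakly preferred to every minimal element of T under ≿. -/
open Finset

variable {A : Type*}

theorem cnt_pos_iff {rank : A → ℕ} {S : Finset A} {l : ℕ} :
    0 < cnt rank S l ↔ ∃ a ∈ S, rank a = l := by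
  simp only [cnt, card_pos, filter_nonempty_iff]

theorem le_rank_of_cnt_pos {rank : A → ℕ} {T : Finset A} {t : A} {l : ℕ}
    (ht : ∀ x ∈ T, rank x ≤ rank t) (hl : 0 < cnt rank T l) : l ≤ rank t := by
  obtain ⟨a, ha, rfl⟩ := cnt_pos_iff.mp hl
  exact ht a ha

/-- If the largest class `l` where the counts differ has `l < m`, the counts agree at `m`;
otherwise `T` has more members than `S`, hence some, in the class `l ≥ m`. -/
theorem ULge.exists_le_cnt_pos {rank : A → ℕ} {S T : Finset A} (h : ULge rank S T) {m : ℕ}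
    (hm : 0 < cnt rank S m) : ∃ l, m ≤ l ∧ 0 < cnt rank T l := by
  rcases h with heq | ⟨l, hlt, habove⟩
  · exact ⟨m, le_rfl, heq m ▸ hm⟩
  · rcases le_or_gt m l with hml | hlm
    · exact ⟨l, hml, (Nat.zero_le _).trans_lt hlt⟩
    · exact ⟨m, le_rfl, habove m hlm ▸ hm⟩

theorem ul_implies_worst_general (rank : A → ℕ) (S T : Finset A)
    (h : ULge rank S T) : Wge rank S T := by
  intro s hs _ t _ ht
  obtain ⟨l, hsl, hl⟩ := h.exists_le_cnt_pos (cnt_pos_iff.mpr ⟨s, hs, rfl⟩)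
  exact hsl.trans (le_rank_of_cnt_pos ht hl)

theorem ul_implies_worst [Fintype A] (rank : A → ℕ) (S T : Finset A)
    (hS : S.Nonempty) (hT : T.Nonempty) (hcard : S.card = T.card)
    (h : ULge rank S T) : Wge rank S T :=
  ul_implies_worst_general rank S T h
end

section
/- Let A be a finite set with a complete transitive preference relation ≿, and S, T subsets of A of the same size k. If S ≻^RS T (i.e., S ≿^RS T and not T ≿^RS S), then S ≻^DL T and S ≻^UL T. -/
open Finset

variable {A : Type*}

/-! A responsive improvement `f : T → S` moves members only to weakly better classes, so it maps
the members of `T` of rank `≤ m` injectively into those of `S`, and the members of `T` of rank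
`≥ m` onto those of `S`. Equal class counts would give a rank-preserving bijection and hence
`T ≿ᴿˢ S`, so the counts differ. They agree on the classes preferred to the first differing
class, so the first inequality there shows that `S` has more members in it; dually, the second
inequality at the last differing class shows that `S` has fewer. DL and UL are the `Lex` and `Colex` orders on the
count vectors. -/

section
variable {rank : A → ℕ} {S T : Finset A}

lemma dlge_iff_toLex_le : DLge rank S T ↔ toLex (cnt rank T) ≤ toLex (cnt rank S) := by
  rw [le_iff_eq_or_lt, DLge, toLex_inj, eq_comm, funext_iff]
  refine or_congr Iff.rfl (exists_congr fun l => ?_)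
  simp only [Pi.toLex_apply]
  exact and_comm.trans (and_congr_left' (forall₂_congr fun _ _ => eq_comm))

lemma ulge_iff_toColex_le : ULge rank S T ↔ toColex (cnt rank S) ≤ toColex (cnt rank T) := by
  rw [le_iff_eq_or_lt, ULge, toColex_inj, funext_iff]
  exact or_congr Iff.rfl (exists_congr fun l => and_comm)

lemma rsge_of_equiv (e : T ≃ S) (he : ∀ a, rank (e a) ≤ rank a) : RSge rank S T := by
  classical
  refine ⟨fun a => if h : a ∈ T then e ⟨a, h⟩ else a,
    ⟨fun a ha => ?_, fun a ha b hb hab => ?_,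
      fun b hb => ⟨e.symm ⟨b, hb⟩, (e.symm ⟨b, hb⟩).2, ?_⟩⟩, fun a ha => ?_⟩
  · simp [dif_pos (mem_coe.1 ha)]
  · simpa [dif_pos (mem_coe.1 ha), dif_pos (mem_coe.1 hb), Subtype.ext_iff] using hab
  · simp
  · simpa [dif_pos ha] using he ⟨a, ha⟩

lemma rsge_of_cnt_eq (h : cnt rank S = cnt rank T) : RSge rank S T := by
  have card_fiber (X : Finset A) (c : ℕ) : Fintype.card {a : X // rank a = c} = cnt rank X c := by
    simp [cnt, Fintype.card_subtype, filter_attach (fun a => rank a = c)]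
  let e (c : ℕ) : {a : T // rank a = c} ≃ {b : S // rank b = c} :=
    Fintype.equivOfCardEq (by rw [card_fiber, card_fiber, h])
  exact rsge_of_equiv (Equiv.ofFiberEquiv e) fun a => (Equiv.ofFiberEquiv_map e a).le

variable {p : ℕ → Prop} [DecidablePred p]

lemma RSge.card_filter_le_of_antitone (h : RSge rank S T) (hp : Antitone p) :
    #{a ∈ T | p (rank a)} ≤ #{a ∈ S | p (rank a)} := by
  obtain ⟨f, hf, hle⟩ := h
  refine card_le_card_of_injOn f (fun a ha => ?_) (hf.injOn.mono fun a ha => ?_)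
  · rw [coe_filter] at ha ⊢
    exact ⟨hf.mapsTo ha.1, hp (hle a ha.1) ha.2⟩
  · exact (mem_filter.1 ha).1

lemma RSge.card_filter_le_of_monotone (h : RSge rank S T) (hp : Monotone p) :
    #{a ∈ S | p (rank a)} ≤ #{a ∈ T | p (rank a)} := by
  obtain ⟨f, hf, hle⟩ := h
  refine card_le_card_of_surjOn f fun b hb => ?_
  rw [coe_filter] at hb
  obtain ⟨a, ha, rfl⟩ := hf.surjOn hb.1
  exact ⟨a, by simpa using ⟨ha, hp (hle a ha) hb.2⟩, rfl⟩

lemma card_filter_rank_eq_of_cnt_eq (h : ∀ l, p l → cnt rank S l = cnt rank T l) :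
    #{a ∈ S | p (rank a)} = #{a ∈ T | p (rank a)} := by
  classical
  set levels := ((S ∪ T).image rank).filter p
  have fiberwise (X : Finset A) (hX : X ⊆ S ∪ T) :
      #{a ∈ X | p (rank a)} = ∑ l ∈ levels, cnt rank X l := by
    rw [card_eq_sum_card_fiberwise (f := rank) (t := levels)]
    · refine sum_congr rfl fun l hl => ?_
      rw [cnt, filter_filter]
      congr 1
      exact filter_congr fun a _ => ⟨And.right, fun ha => ⟨ha ▸ (mem_filter.1 hl).2, ha⟩⟩
    · intro a ha
      rw [coe_filter] at ha
      simpa [levels] using ⟨⟨a, mem_union.1 (hX ha.1), rfl⟩, ha.2⟩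
  rw [fiberwise S subset_union_left, fiberwise T subset_union_right]
  exact sum_congr rfl fun l hl => h l (mem_filter.1 hl).2

lemma card_filter_or_rank_eq {l : ℕ} (hl : ¬ p l) (X : Finset A) :
    #{a ∈ X | p (rank a) ∨ rank a = l} = #{a ∈ X | p (rank a)} + cnt rank X l := by
  classical
  rw [filter_or, cnt, card_union_of_disjoint]
  exact disjoint_filter.2 fun a _ hpa hal => hl (hal ▸ hpa)

lemma finite_setOf_cnt_ne : {l | cnt rank S l ≠ cnt rank T l}.Finite := by
  classical
  refine ((S ∪ T).image rank).finite_toSet.subset fun l hl => by_contra fun hl' => hl ?_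
  have cnt_eq_zero (X : Finset A) (hX : X ⊆ S ∪ T) : cnt rank X l = 0 :=
    card_eq_zero.2 <| filter_eq_empty_iff.2 fun a ha hal => hl' (mem_image.2 ⟨a, hX ha, hal⟩)
  rw [cnt_eq_zero S subset_union_left, cnt_eq_zero T subset_union_right]

lemma RSge.toLex_cnt_lt (h : RSge rank S T) (hne : cnt rank S ≠ cnt rank T) :
    toLex (cnt rank T) < toLex (cnt rank S) := by
  obtain ⟨l, hl, hmin⟩ := finite_setOf_cnt_ne.exists_minimal (Function.ne_iff.1 hne)
  have agree_below (j : ℕ) (hj : j < l) : cnt rank S j = cnt rank T j :=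
    by_contra fun hj' => (hmin hj' hj.le).not_gt hj
  have below := card_filter_rank_eq_of_cnt_eq (p := (· < l)) agree_below
  have upto := h.card_filter_le_of_antitone (p := fun i => i < l ∨ i = l)
    fun i j hij hj => by omega
  rw [card_filter_or_rank_eq (p := (· < l)) (lt_irrefl l) S,
    card_filter_or_rank_eq (p := (· < l)) (lt_irrefl l) T, below] at upto
  exact ⟨l, fun j hj => (agree_below j hj).symm,
    (Nat.le_of_add_le_add_left upto).lt_of_ne (Ne.symm hl)⟩

lemma RSge.toColex_cnt_lt (h : RSge rank S T) (hne : cnt rank S ≠ cnt rank T) :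
    toColex (cnt rank S) < toColex (cnt rank T) := by
  obtain ⟨l, hl, hmax⟩ := finite_setOf_cnt_ne.exists_maximal (Function.ne_iff.1 hne)
  have agree_above (j : ℕ) (hj : l < j) : cnt rank S j = cnt rank T j :=
    by_contra fun hj' => (hmax hj' hj.le).not_gt hj
  have above := card_filter_rank_eq_of_cnt_eq (p := (l < ·)) agree_above
  have from_l := h.card_filter_le_of_monotone (p := fun i => l < i ∨ i = l)
    fun i j hij hj => by omega
  rw [card_filter_or_rank_eq (p := (l < ·)) (lt_irrefl l) S,
    card_filter_or_rank_eq (p := (l < ·)) (lt_irrefl l) T, above] at from_l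
  exact ⟨l, agree_above, (Nat.le_of_add_le_add_left from_l).lt_of_ne hl⟩

end

theorem rs_strict_implies_dl_ul_strict_general (rank : A → ℕ) (S T : Finset A)
    (h : RSge rank S T ∧ ¬ RSge rank T S) :
    (DLge rank S T ∧ ¬ DLge rank T S) ∧ (ULge rank S T ∧ ¬ ULge rank T S) := by
  obtain ⟨hST, hTS⟩ := h
  have hne : cnt rank S ≠ cnt rank T := fun heq => hTS (rsge_of_cnt_eq heq.symm)
  simp only [dlge_iff_toLex_le, ulge_iff_toColex_le, ← lt_iff_le_not_ge]
  exact ⟨hST.toLex_cnt_lt hne, hST.toColex_cnt_lt hne⟩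

theorem rs_strict_implies_dl_ul_strict [Fintype A] (rank : A → ℕ) (k : ℕ)
    (S T : Finset A) (hS : S.card = k) (hT : T.card = k)
    (h : RSge rank S T ∧ ¬ RSge rank T S) :
    (DLge rank S T ∧ ¬ DLge rank T S) ∧ (ULge rank S T ∧ ¬ ULge rank T S) :=
  rs_strict_implies_dl_ul_strict_general rank S T h
end

section
/- Fix a profile of complete transitive preferences over a finite set A with |A| β‰₯ k. There exists a committee of size k that is simultaneously W-efficient and UL-efficient. -/
open Finset

variable {A : Type*}

section Pareto

variable {α I : Type*}

def ParetoImproves (ge : I → α → α → Prop) (y x : α) : Prop :=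
  (∀ i, ge i y x) ∧ ∃ i, ¬ ge i x y

def ParetoOptimal (ge : I → α → α → Prop) (x : α) : Prop :=
  ∀ y, ¬ ParetoImproves ge y x

variable {ge : I → α → α → Prop}

theorem paretoImproves_irrefl (refl : ∀ i x, ge i x x) (x : α) : ¬ ParetoImproves ge x x :=
  fun ⟨_, i, hi⟩ => hi (refl i x)

theorem ParetoImproves.trans_weak (trans : ∀ i x y z, ge i x y → ge i y z → ge i x z)
    {x y z : α} (hxy : ParetoImproves ge x y) (hyz : ∀ i, ge i y z) :
    ParetoImproves ge x z := by
  obtain ⟨hge, i, hi⟩ := hxy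
  exact ⟨fun j => trans j _ _ _ (hge j) (hyz j), i, fun h => hi (trans i _ _ _ (hyz i) h)⟩

theorem wellFounded_paretoImproves [Finite α] (refl : ∀ i x, ge i x x)
    (trans : ∀ i x y z, ge i x y → ge i y z → ge i x z) :
    WellFounded (ParetoImproves ge) :=
  have : IsTrans α (ParetoImproves ge) := ⟨fun _ _ _ hxy hyz => hxy.trans_weak trans hyz.1⟩
  have : Std.Irrefl (ParetoImproves ge) := ⟨paretoImproves_irrefl refl⟩
  Finite.wellFounded_of_trans_of_irrefl _

/-- Take `w₀` optimal for `ge`, then `w` optimal for `ge'` among the alternatives that everyone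
weakly `ge`-prefers to `w₀`: a `ge'`-improvement of `w` is a weak `ge`-improvement, so it stays
in that set, and a `ge`-improvement of `w` would be one of `w₀`. -/
theorem exists_paretoOptimal_and_paretoOptimal_of_imp [Finite α] [Nonempty α]
    {ge' : I → α → α → Prop} (refl : ∀ i x, ge i x x)
    (trans : ∀ i x y z, ge i x y → ge i y z → ge i x z) (refl' : ∀ i x, ge' i x x)
    (trans' : ∀ i x y z, ge' i x y → ge' i y z → ge' i x z)
    (imp : ∀ i x y, ge' i x y → ge i x y) :
    ∃ w, ParetoOptimal ge w ∧ ParetoOptimal ge' w := by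
  obtain ⟨w₀, -, hw₀⟩ :=
    (wellFounded_paretoImproves refl trans).has_min Set.univ Set.univ_nonempty
  obtain ⟨w, hww₀, hw⟩ := (wellFounded_paretoImproves refl' trans').has_min
    {x | ∀ i, ge i x w₀} ⟨w₀, fun i => refl i w₀⟩
  refine ⟨w, fun x hx => hw₀ x trivial (hx.trans_weak trans hww₀), fun x hx => hw x ?_ hx⟩
  exact fun i => trans i _ _ _ (imp i _ _ (hx.1 i)) (hww₀ i)

end Pareto

section Extensions

variable {I : Type*} {r : A → ℕ} {S T U : Finset A}

abbrev Committee (A : Type*) (k : ℕ) : Type _ := {W : Finset A // W.card = k}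

theorem wge_refl (r : A → ℕ) (S : Finset A) : Wge r S S :=
  fun s hs _ _ _ hmax => hmax s hs

theorem wge_empty_left (r : A → ℕ) (T : Finset A) : Wge r ∅ T :=
  fun s hs => absurd hs (notMem_empty s)

theorem wge_trans (hT : T.Nonempty) (hST : Wge r S T) (hTU : Wge r T U) : Wge r S U := by
  intro s hs hsm u hu hum
  obtain ⟨t, ht, htm⟩ := T.exists_max_image r hT
  exact (hST s hs hsm t ht htm).trans (hTU t ht htm u hu hum)

/-- `∅` is `Wge`-indifferent to every set, so `Wge` is only transitive through nonempty sets. -/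
theorem wge_trans_of_card_eq (hcard : S.card = T.card) (hST : Wge r S T) (hTU : Wge r T U) :
    Wge r S U := by
  rcases T.eq_empty_or_nonempty with rfl | hT
  · rw [card_empty, card_eq_zero] at hcard
    exact hcard ▸ wge_empty_left r U
  · exact wge_trans hT hST hTU

theorem ulge_refl (r : A → ℕ) (S : Finset A) : ULge r S S := Or.inl fun _ => rfl

theorem ulge_trans (hST : ULge r S T) (hTU : ULge r T U) : ULge r S U := by
  rcases hST with e₁ | ⟨l₁, hl₁, a₁⟩ <;> rcases hTU with e₂ | ⟨l₂, hl₂, a₂⟩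
  · exact Or.inl fun l => (e₁ l).trans (e₂ l)
  · exact Or.inr ⟨l₂, e₁ l₂ ▸ hl₂, fun l h => (e₁ l).trans (a₂ l h)⟩
  · exact Or.inr ⟨l₁, hl₁.trans_le (e₂ l₁).le, fun l h => (a₁ l h).trans (e₂ l)⟩
  · rcases lt_trichotomy l₁ l₂ with h | rfl | h
    · exact Or.inr ⟨l₂, a₁ l₂ h ▸ hl₂, fun l h' => (a₁ l (h.trans h')).trans (a₂ l h')⟩
    · exact Or.inr ⟨l₁, hl₁.trans hl₂, fun l h' => (a₁ l h').trans (a₂ l h')⟩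
    · exact Or.inr ⟨l₁, hl₁.trans_le (a₂ l₁ h).le,
        fun l h' => (a₁ l h').trans (a₂ l (h.trans h'))⟩

theorem cnt_pos {l : ℕ} : 0 < cnt r S l ↔ ∃ a ∈ S, r a = l := by
  rw [cnt, card_pos, filter_nonempty_iff]

theorem ULge.wge (h : ULge r S T) : Wge r S T := by
  intro s hs _ t _ htm
  suffices ∃ t' ∈ T, r s ≤ r t' by
    obtain ⟨t', ht', hst'⟩ := this
    exact hst'.trans (htm t' ht')
  have hs_pos : 0 < cnt r S (r s) := cnt_pos.2 ⟨s, hs, rfl⟩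
  rcases h with heq | ⟨l, hl, habove⟩
  · obtain ⟨t', ht', e⟩ := cnt_pos.1 (heq (r s) ▸ hs_pos)
    exact ⟨t', ht', e.ge⟩
  · rcases lt_or_ge l (r s) with hlt | hle
    · obtain ⟨t', ht', e⟩ := cnt_pos.1 (habove _ hlt ▸ hs_pos)
      exact ⟨t', ht', e.ge⟩
    · obtain ⟨t', ht', e⟩ := cnt_pos.1 ((Nat.zero_le _).trans_lt hl)
      exact ⟨t', ht', e ▸ hle⟩

theorem efficient_of_paretoOptimal {ge : (A → ℕ) → Finset A → Finset A → Prop}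
    {rank : I → A → ℕ} {k : ℕ} {W : Finset A} (hW : W.card = k)
    (h : ParetoOptimal (fun i (X Y : Committee A k) => ge (rank i) X Y) ⟨W, hW⟩) :
    Efficient ge rank k W :=
  fun ⟨W', hW', hge, i, _, hi⟩ => h ⟨W', hW'⟩ ⟨hge, i, hi⟩

end Extensions

theorem exists_worst_and_ul_efficient_general {I : Type*} [Fintype A]
    (rank : I → A → ℕ) (k : ℕ) (hk : k ≤ Fintype.card A) :
    ∃ W : Finset A, W.card = k ∧ Efficient Wge rank k W ∧ Efficient ULge rank k W := by
  obtain ⟨W₀, -, hW₀⟩ := exists_subset_card_eq (s := univ) (n := k) hk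
  have : Nonempty (Committee A k) := ⟨⟨W₀, hW₀⟩⟩
  obtain ⟨⟨W, hW⟩, hW_opt, hUL_opt⟩ :=
    exists_paretoOptimal_and_paretoOptimal_of_imp
      (ge := fun i (X Y : Committee A k) => Wge (rank i) X Y)
      (ge' := fun i X Y => ULge (rank i) X Y)
      (fun i X => wge_refl _ X.1) (fun i X Y _ => wge_trans_of_card_eq (X.2.trans Y.2.symm))
      (fun i X => ulge_refl _ X.1) (fun i _ _ _ => ulge_trans) (fun i _ _ => ULge.wge)
  exact ⟨W, hW, efficient_of_paretoOptimal hW hW_opt, efficient_of_paretoOptimal hW hUL_opt⟩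

theorem exists_worst_and_ul_efficient {I : Type*} [Fintype I] [Fintype A]
    (rank : I → A → ℕ) (k : ℕ) (hk : k ≤ Fintype.card A) :
    ∃ W : Finset A, W.card = k ∧ Efficient Wge rank k W ∧ Efficient ULge rank k W :=
  exists_worst_and_ul_efficient_general rank k hk
end

section
/- Let score : A β†’ ℝ be obtained as score(a) = βˆ‘_{i} s_i(a) where, for each agent i, s_i : A β†’ ℝ is strictly decreasing with respect to ≿_i (a ≻_i b implies s_i(a) > s_i(b), and a ∼_i b implies s_i(a) = s_i(b)). Then any committee W of size k consisting of k alternatives of maximum total score (i.e., score(w) β‰₯ score(v) for all w ∈ W, v βˆ‰ W) is RS-efficient. -/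
open Finset

variable {A : Type*}

/-!
A score function that decreases strictly along an agent's preference turns every responsive
improvement `W' ≿ᴿˢ W` into a weak increase of that agent's score sum, and a strict improvement
into a strict increase, because the bijection can be read off term by term. A Pareto
RS-improvement over `W` therefore has larger total score than `W`, while a set of `k`
alternatives of maximum total score has the largest total score among all `k`-sets.
-/

namespace Finset

variable {ι M : Type*} [AddCommMonoid M] [LinearOrder M]

lemma sum_le_sum_of_card_eq_of_forall_le [IsOrderedAddMonoid M] {s t : Finset ι} {f : ι → M}
    (hcard : s.card = t.card) (hle : ∀ a ∈ s, ∀ b ∈ t, f a ≤ f b) :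
    ∑ a ∈ s, f a ≤ ∑ b ∈ t, f b := by
  rcases t.eq_empty_or_nonempty with rfl | ht
  · simp [card_eq_zero.mp hcard]
  obtain ⟨b₀, hb₀, hmin⟩ := t.exists_min_image f ht
  calc ∑ a ∈ s, f a ≤ s.card • f b₀ := sum_le_card_nsmul s f _ fun a ha => hle a ha b₀ hb₀
    _ = t.card • f b₀ := by rw [hcard]
    _ ≤ ∑ b ∈ t, f b := card_nsmul_le_sum t f _ hmin

lemma sum_le_sum_of_card_eq_of_forall_notMem_le [IsOrderedCancelAddMonoid M]
    {s t : Finset ι} {f : ι → M} (hcard : t.card = s.card)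
    (hmax : ∀ a ∈ s, ∀ b, b ∉ s → f b ≤ f a) :
    ∑ b ∈ t, f b ≤ ∑ a ∈ s, f a := by
  classical
  rw [← sum_sdiff_le_sum_sdiff]
  exact sum_le_sum_of_card_eq_of_forall_le (card_sdiff_comm hcard)
    fun b hb a ha => hmax a (mem_sdiff.mp ha).1 b (mem_sdiff.mp hb).2

end Finset

section RSge

variable {rank : A → ℕ} {S T : Finset A}

lemma rsge_of_bijOn_of_rank_eq {f : A → A} (hf : Set.BijOn f T S)
    (hrank : ∀ a ∈ T, rank (f a) = rank a) : RSge rank T S := by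
  cases isEmpty_or_nonempty A
  · refine ⟨id, ?_, fun a => isEmptyElim a⟩
    simp [Subsingleton.elim S T, Set.bijOn_id]
  · refine ⟨Function.invFunOn f T, hf.invOn_invFunOn.symm.bijOn (hf.surjOn.mapsTo_invFunOn)
      hf.mapsTo, fun b hb => ?_⟩
    rw [← hrank _ (hf.surjOn.mapsTo_invFunOn hb), hf.invOn_invFunOn.2 hb]

variable {M : Type*} [AddCommMonoid M] [PartialOrder M] {s : A → M}

lemma RSge.sum_le [IsOrderedAddMonoid M] (hanti : ∀ a b, rank a ≤ rank b → s b ≤ s a)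
    (h : RSge rank S T) : ∑ a ∈ T, s a ≤ ∑ a ∈ S, s a := by
  obtain ⟨f, hf, hrank⟩ := h
  calc ∑ a ∈ T, s a ≤ ∑ a ∈ T, s (f a) := sum_le_sum fun a ha => hanti _ _ (hrank a ha)
    _ = ∑ a ∈ S, s a := sum_nbij f hf.mapsTo hf.injOn hf.surjOn fun _ _ => rfl

lemma RSge.sum_lt [IsOrderedCancelAddMonoid M] (hanti : ∀ a b, rank a ≤ rank b → s b ≤ s a)
    (hstrict : ∀ a b, rank a < rank b → s b < s a) (h : RSge rank S T)
    (hnot : ¬ RSge rank T S) : ∑ a ∈ T, s a < ∑ a ∈ S, s a := by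
  obtain ⟨f, hf, hrank⟩ := h
  obtain ⟨a, ha, hlt⟩ : ∃ a ∈ T, rank (f a) < rank a := by
    by_contra! hge
    exact hnot (rsge_of_bijOn_of_rank_eq hf fun a ha => (hrank a ha).antisymm (hge a ha))
  calc ∑ a ∈ T, s a < ∑ a ∈ T, s (f a) :=
        sum_lt_sum (fun a ha => hanti _ _ (hrank a ha)) ⟨a, ha, hstrict _ _ hlt⟩
    _ = ∑ a ∈ S, s a := sum_nbij f hf.mapsTo hf.injOn hf.surjOn fun _ _ => rfl

end RSge

theorem best_score_committee_rs_efficient_general {I : Type*} [Fintype I]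
    (rank : I → A → ℕ) (s : I → A → ℝ)
    (hstrict : ∀ i a b, rank i a < rank i b → s i b < s i a)
    (hindiff : ∀ i a b, rank i a = rank i b → s i a = s i b)
    (k : ℕ) (W : Finset A) (hW : W.card = k)
    (hmax : ∀ w ∈ W, ∀ v : A, v ∉ W → (∑ i, s i v) ≤ ∑ i, s i w) :
    Efficient RSge rank k W := by
  rintro ⟨W', hW', hge, i, hgt, hnot⟩
  have hanti : ∀ i a b, rank i a ≤ rank i b → s i b ≤ s i a := fun i a b h =>
    h.lt_or_eq.elim (fun h => (hstrict i a b h).le) fun h => (hindiff i a b h).ge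
  have hlt : ∑ a ∈ W, ∑ i, s i a < ∑ a ∈ W', ∑ i, s i a := by
    rw [sum_comm, sum_comm (s := W')]
    exact sum_lt_sum (fun i _ => (hge i).sum_le (hanti i))
      ⟨i, mem_univ i, hgt.sum_lt (hanti i) (hstrict i) hnot⟩
  exact (sum_le_sum_of_card_eq_of_forall_notMem_le (hW'.trans hW.symm) hmax).not_gt hlt

theorem best_score_committee_rs_efficient {I : Type*} [Fintype I] [Fintype A]
    (rank : I → A → ℕ) (s : I → A → ℝ)
    (hstrict : ∀ i a b, rank i a < rank i b → s i b < s i a)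
    (hindiff : ∀ i a b, rank i a = rank i b → s i a = s i b)
    (k : ℕ) (W : Finset A) (hW : W.card = k)
    (hmax : ∀ w ∈ W, ∀ v : A, v ∉ W → (∑ i, s i v) ≤ ∑ i, s i w) :
    Efficient RSge rank k W :=
  best_score_committee_rs_efficient_general rank s hstrict hindiff k W hW hmax
end

section
/- Fix a profile of complete transitive preferences and a size-k committee W. For each agent i, let t_i be the index of the least preferred indifference class of i intersecting W, and let B_i = A βˆ– ((βˆͺ_{lβ‰₯t_i} E_i^l) βˆͺ βˆͺ_{jβ‰ i} βˆͺ_{l>t_j} E_j^l). Then W is not W-efficient (i.e., there is a size-k committee that is a Pareto improvement over W under the 'worst' extension) if and only if |B_i| β‰₯ k for some agent i. -/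
/-!
Under the worst extension an agent compares committees by the rank of their worst
members, i.e. by `Finset.sup`. Hence a nonempty `W'` weakly improves `W` for everybody
and strictly for agent `i` exactly when every member of `W'` is ranked strictly above
the worst class of `W` by `i` and not below it by any other agent, i.e. `W' ⊆ B_i`;
and a size-`k` subset of `B_i` exists iff `k ≤ |B_i|`.
-/

open Finset

variable {A : Type*}

theorem wge_iff {rank : A → ℕ} {S T : Finset A} :
    Wge rank S T ↔ S.Nonempty → T.Nonempty → S.sup rank ≤ T.sup rank := by
  constructor
  · intro h hS hT
    obtain ⟨s, hs, hse⟩ := Finset.exists_mem_eq_sup S hS rank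
    obtain ⟨t, ht, hte⟩ := Finset.exists_mem_eq_sup T hT rank
    rw [hse, hte]
    exact h s hs (fun x hx => hse ▸ Finset.le_sup hx) t ht (fun x hx => hte ▸ Finset.le_sup hx)
  · intro h s hs _ t ht htmax
    calc rank s ≤ S.sup rank := Finset.le_sup hs
      _ ≤ T.sup rank := h ⟨s, hs⟩ ⟨t, ht⟩
      _ ≤ rank t := Finset.sup_le htmax

theorem not_wge_iff {rank : A → ℕ} {S T : Finset A} :
    ¬ Wge rank S T ↔ S.Nonempty ∧ T.Nonempty ∧ T.sup rank < S.sup rank := by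
  simp only [wge_iff, Classical.not_imp, not_le]

section StrictImprovers

variable {I : Type*} [Fintype I] [DecidableEq I] [Fintype A]

/-- The set `B_i` of the paper: `rank i a < W.sup (rank i)` says that `a` lies in a class
of `i` above `t_i`, and `rank j a ≤ W.sup (rank j)` that `a` lies in a class of `j` not
below `t_j`. -/
def strictImprovers (rank : I → A → ℕ) (W : Finset A) (i : I) : Finset A :=
  univ.filter fun a : A =>
    rank i a < W.sup (rank i) ∧ ∀ j, j ≠ i → rank j a ≤ W.sup (rank j)

theorem mem_strictImprovers {rank : I → A → ℕ} {W : Finset A} {i : I} {a : A} :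
    a ∈ strictImprovers rank W i ↔
      rank i a < W.sup (rank i) ∧ ∀ j, j ≠ i → rank j a ≤ W.sup (rank j) := by
  simp [strictImprovers]

theorem wge_and_not_wge_iff_subset_strictImprovers {rank : I → A → ℕ} {W W' : Finset A}
    {i : I} (hW' : W'.Nonempty) :
    ((∀ j, Wge (rank j) W' W) ∧ ¬ Wge (rank i) W W') ↔ W' ⊆ strictImprovers rank W i := by
  rw [not_wge_iff]
  simp only [wge_iff]
  constructor
  · rintro ⟨hall, hW, -, hlt⟩ a ha
    refine mem_strictImprovers.mpr ⟨(Finset.le_sup ha).trans_lt hlt, fun j _ => ?_⟩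
    exact (Finset.le_sup ha).trans (hall j hW' hW)
  · intro hsub
    obtain ⟨a, ha⟩ := hW'
    have hlt : W'.sup (rank i) < W.sup (rank i) :=
      (Finset.sup_lt_iff ((Nat.zero_le _).trans_lt (mem_strictImprovers.mp (hsub ha)).1)).mpr
        fun b hb => (mem_strictImprovers.mp (hsub hb)).1
    have hW : W.Nonempty := nonempty_iff_ne_empty.mpr fun h => by simp [h] at hlt
    refine ⟨fun j _ _ => Finset.sup_le fun b hb => ?_, hW, ⟨a, ha⟩, hlt⟩
    by_cases hji : j = i
    · subst hji
      exact ((Finset.le_sup hb).trans_lt hlt).le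
    · exact (mem_strictImprovers.mp (hsub hb)).2 j hji

end StrictImprovers

theorem worst_efficiency_characterization_general {I : Type*} [Fintype I] [DecidableEq I]
    [Fintype A] (rank : I → A → ℕ) (k : ℕ) (hk : 0 < k) (W : Finset A) :
    ¬ Efficient Wge rank k W ↔
      ∃ i, k ≤ (Finset.univ.filter fun a : A =>
        rank i a < W.sup (rank i) ∧ ∀ j, j ≠ i → rank j a ≤ W.sup (rank j)).card := by
  have nonempty_of_card {W' : Finset A} (hcard : W'.card = k) : W'.Nonempty :=
    card_pos.mp (hcard ▸ hk)
  change _ ↔ ∃ i, k ≤ (strictImprovers rank W i).card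
  rw [Efficient, not_not]
  constructor
  · rintro ⟨W', hcard, hall, i, -, hstrict⟩
    have hsub := (wge_and_not_wge_iff_subset_strictImprovers (nonempty_of_card hcard)).mp
      ⟨hall, hstrict⟩
    exact ⟨i, hcard ▸ card_le_card hsub⟩
  · rintro ⟨i, hB⟩
    obtain ⟨W', hsub, hcard⟩ := exists_subset_card_eq hB
    obtain ⟨hall, hstrict⟩ :=
      (wge_and_not_wge_iff_subset_strictImprovers (nonempty_of_card hcard)).mpr hsub
    exact ⟨W', hcard, hall, i, hall i, hstrict⟩

theorem worst_efficiency_characterization {I : Type*} [Fintype I] [DecidableEq I]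
    [Fintype A] (rank : I → A → ℕ) (k : ℕ) (hk : 0 < k) (W : Finset A)
    (hW : W.card = k) :
    ¬ Efficient Wge rank k W ↔
      ∃ i, k ≤ (Finset.univ.filter fun a : A =>
        rank i a < W.sup (rank i) ∧ ∀ j, j ≠ i → rank j a ≤ W.sup (rank j)).card :=
  worst_efficiency_characterization_general rank k hk W
end

section
/- Fix a profile of complete transitive preferences over finite A with |A| β‰₯ k. Serial dictatorship for the worst extension β€” processing agents in a fixed order, where each agent deletes from the current pool A' (initialized to A) as many of her least preferred indifference classes as possible subject to keeping |A'| β‰₯ k, and finally any k alternatives of the remaining pool are selected β€” always outputs a W-efficient committee of size k. -/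
open Finset

variable {A : Type*}

/-- One step of serial dictatorship for the worst extension: the agent with
rank function `r` deletes from the pool `P` as many of her least preferred
indifference classes as possible, subject to keeping at least `k` alternatives:
she keeps exactly the alternatives of rank at most the least threshold `t` such
that at least `k` alternatives of `P` have rank at most `t`. -/
noncomputable def prune (k : ℕ) (r : A → ℕ) (P : Finset A) : Finset A :=
  P.filter fun a => r a ≤ sInf {t : ℕ | k ≤ (P.filter fun b => r b ≤ t).card}

/-- The pool remaining after agents `0, 1, …, n-1` have pruned in order,
starting from all of `A`. -/
noncomputable def finalPool [Fintype A] {n : ℕ} (rank : Fin n → A → ℕ) (k : ℕ) :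
    Finset A :=
  (List.finRange n).foldl (fun P i => prune k (rank i) P) Finset.univ

/-!
Suppose `W'` of size `k` Pareto-dominates `W` under the worst extension. Going through the
dictators in order, `W'` survives every pruning step: its worst element is no worse than the
worst element of `W`, which survives. So `W'` lies in the pool that the strictly improving
dictator prunes, and since `|W'| = k` her threshold is at most the rank of the worst element
of `W'`; hence the worst element of `W` is no worse than that of `W'`, a contradiction.
-/

noncomputable def pruneThreshold (k : ℕ) (r : A → ℕ) (P : Finset A) : ℕ :=
  sInf {t : ℕ | k ≤ (P.filter fun b => r b ≤ t).card}

lemma mem_prune {k : ℕ} {r : A → ℕ} {P : Finset A} {a : A} :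
    a ∈ prune k r P ↔ a ∈ P ∧ r a ≤ pruneThreshold k r P :=
  mem_filter

lemma pruneThreshold_le {k : ℕ} {r : A → ℕ} {P S : Finset A} {m : ℕ} (hSP : S ⊆ P)
    (hkS : k ≤ S.card) (hS : ∀ x ∈ S, r x ≤ m) : pruneThreshold k r P ≤ m :=
  Nat.sInf_le <| hkS.trans <| card_le_card fun x hx => mem_filter.mpr ⟨hSP hx, hS x hx⟩

lemma wge_of_subset_prune {k : ℕ} {r : A → ℕ} {P W W' : Finset A}
    (hW : W ⊆ prune k r P) (hW'P : W' ⊆ P) (hkW' : k ≤ W'.card) : Wge r W W' :=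
  fun _ hs _ _ _ htmax => (mem_prune.mp (hW hs)).2.trans (pruneThreshold_le hW'P hkW' htmax)

lemma subset_prune_of_wge {k : ℕ} {r : A → ℕ} {P W W' : Finset A}
    (hW : W ⊆ prune k r P) (hWne : W.Nonempty) (hW'P : W' ⊆ P) (hdom : Wge r W' W) :
    W' ⊆ prune k r P := by
  intro a ha
  obtain ⟨a', ha', ha'max⟩ := W'.exists_max_image r ⟨a, ha⟩
  obtain ⟨t, ht, htmax⟩ := W.exists_max_image r hWne
  have hat : r a ≤ r t := (ha'max a ha).trans (hdom a' ha' ha'max t ht htmax)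
  exact mem_prune.mpr ⟨hW'P ha, hat.trans (mem_prune.mp (hW ht)).2⟩

lemma foldl_prune_subset {I : Type*} (rank : I → A → ℕ) (k : ℕ) (l : List I)
    (P : Finset A) : l.foldl (fun P i => prune k (rank i) P) P ⊆ P := by
  induction l generalizing P with
  | nil => exact Subset.refl P
  | cons i l ih => exact (ih _).trans (filter_subset _ _)

lemma wge_of_subset_foldl_prune {I : Type*} (rank : I → A → ℕ) (k : ℕ) (l : List I)
    {P W W' : Finset A} (hW : W ⊆ l.foldl (fun P i => prune k (rank i) P) P)
    (hWne : W.Nonempty) (hW'P : W' ⊆ P) (hkW' : k ≤ W'.card)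
    (hdom : ∀ i ∈ l, Wge (rank i) W' W) : ∀ i ∈ l, Wge (rank i) W W' := by
  induction l generalizing P with
  | nil => simp
  | cons j l ih =>
    have hWj : W ⊆ prune k (rank j) P := hW.trans (foldl_prune_subset rank k l _)
    have hW'j : W' ⊆ prune k (rank j) P :=
      subset_prune_of_wge hWj hWne hW'P (hdom j List.mem_cons_self)
    rintro i (_ | ⟨_, hi⟩)
    · exact wge_of_subset_prune hWj hW'P hkW'
    · exact ih hW hW'j (fun i hi => hdom i (List.mem_cons_of_mem j hi)) i hi

theorem serial_dictatorship_worst_efficient_general [Fintype A] {n : ℕ}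
    (rank : Fin n → A → ℕ) (k : ℕ)
    (W : Finset A) (hWsub : W ⊆ finalPool rank k) :
    Efficient Wge rank k W := by
  rintro ⟨W', hW'card, hdom, i, -, hstrict⟩
  obtain rfl | hWne := W.eq_empty_or_nonempty
  · exact hstrict fun s hs => absurd hs (notMem_empty s)
  exact hstrict <| wge_of_subset_foldl_prune rank k _ hWsub hWne (subset_univ W')
    hW'card.ge (fun i _ => hdom i) i (List.mem_finRange i)

theorem serial_dictatorship_worst_efficient [Fintype A] {n : ℕ}
    (rank : Fin n → A → ℕ) (k : ℕ) (hk : k ≤ Fintype.card A)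
    (W : Finset A) (hWsub : W ⊆ finalPool rank k) (hW : W.card = k) :
    Efficient Wge rank k W :=
  serial_dictatorship_worst_efficient_general rank k W hWsub
end
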